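/- Let (Y₁, Y₂) be an inverted max-stable pair with extremal coefficient θ_Y ∈ [1,2] and let λ > 0. Then the F^λ-madogram satisfies (1/2)·E[ |F(Y₁)^λ − F(Y₂)^λ| ] = 1/(1+λ) − (λ θ_Y/(λ+θ_Y))·B(λ, θ_Y). -/

import Mathlib

open MeasureTheory Real Filter

/-- The unit Fréchet distribution function: `F(z) = exp(-1/z)` for `z > 0`, `0` otherwise. -/
noncomputable def frechetCDF (z : ℝ) : ℝ := if 0 < z then Real.exp (-1 / z) else 0

/-- The Beta function `B(x,y) = ∫₀¹ t^(x-1) (1-t)^(y-1) dt`. -/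
noncomputable def Beta (x y : ℝ) : ℝ := ∫ t in (0:ℝ)..1, t ^ (x - 1) * (1 - t) ^ (y - 1)

lemma frechetCDF_nonneg (z : ℝ) : 0 ≤ frechetCDF z := by
  unfold frechetCDF; split <;> positivity

lemma frechetCDF_le_one (z : ℝ) : frechetCDF z ≤ 1 := by
  unfold frechetCDF; split
  · rename_i h
    rw [Real.exp_le_one_iff]
    rw [neg_div]
    simp [div_nonneg, h.le]
  · norm_num

lemma frechetCDF_mono : Monotone frechetCDF := by
  intro a b hab
  unfold frechetCDF
  split
  · rename_i ha
    rw [if_pos (ha.trans_le hab)]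
    apply Real.exp_le_exp.mpr
    rw [neg_div, neg_div, neg_le_neg_iff]
    exact one_div_le_one_div_of_le ha hab
  · split
    · positivity
    · exact le_rfl

lemma measurable_frechetCDF : Measurable frechetCDF := by
  unfold frechetCDF
  exact Measurable.ite measurableSet_Ioi (by fun_prop) measurable_const

lemma frechetCDF_lt_iff {t z : ℝ} (ht0 : 0 < t) (ht1 : t < 1) :
    t < frechetCDF z ↔ -1 / Real.log t < z := by
  have hlog : Real.log t < 0 := Real.log_neg ht0 ht1
  have hs : 0 < -1 / Real.log t := by
    rw [div_pos_iff]; right; constructor <;> linarith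
  unfold frechetCDF
  split
  · rename_i hz
    rw [← Real.log_lt_log_iff ht0 (Real.exp_pos _), Real.log_exp]
    rw [neg_div, neg_div, lt_neg, div_lt_iff₀ hz, neg_lt, ← div_lt_iff₀' (neg_pos.mpr hlog)]
    constructor <;> intro h <;> nlinarith [hlog, hz]
  · rename_i hz
    push_neg at hz
    constructor
    · intro h; linarith
    · intro h; linarith

lemma Beta_eq_complex {x y : ℝ} (hx : 0 < x) (hy : 0 < y) :
    (Beta x y : ℂ) = Complex.betaIntegral x y := by
  rw [Complex.betaIntegral, Beta, ← intervalIntegral.integral_ofReal]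
  apply intervalIntegral.integral_congr
  intro t ht
  rw [Set.uIcc_of_le (by norm_num : (0:ℝ) ≤ 1)] at ht
  have h1 := Complex.ofReal_cpow ht.1 (x - 1)
  have h2 := Complex.ofReal_cpow (by linarith [ht.2] : (0:ℝ) ≤ 1 - t) (y - 1)
  push_cast at h1 h2 ⊢
  rw [h1, h2]

lemma betaIntegral_succ_right {u v : ℂ} (hu : 0 < u.re) (hv : 0 < v.re) :
    Complex.betaIntegral u (v + 1) = v / (u + v) * Complex.betaIntegral u v := by
  have huv : 0 < (u + v).re := by simp only [Complex.add_re]; linarith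
  have hv1 : 0 < (v + 1).re := by simp only [Complex.add_re, Complex.one_re]; linarith
  have h1 := Complex.Gamma_mul_Gamma_eq_betaIntegral hu hv1
  have h2 := Complex.Gamma_mul_Gamma_eq_betaIntegral hu hv
  have hvne : v ≠ 0 := fun h => by simp [h] at hv
  have huvne : u + v ≠ 0 := fun h => by simp [h] at huv
  have hga : Complex.Gamma (v + 1) = v * Complex.Gamma v := Complex.Gamma_add_one v hvne
  have hgb : Complex.Gamma (u + v + 1) = (u + v) * Complex.Gamma (u + v) :=
    Complex.Gamma_add_one _ huvne
  have hne : Complex.Gamma (u + v) ≠ 0 := Complex.Gamma_ne_zero_of_re_pos huv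
  have key : (u + v) * (Complex.Gamma (u + v) * Complex.betaIntegral u (v + 1)) =
      v * (Complex.Gamma (u + v) * Complex.betaIntegral u v) := by
    have e : u + (v + 1) = u + v + 1 := by ring
    rw [e, hgb] at h1
    linear_combination -h1 + Complex.Gamma u * hga + v * h2
  have key2 : (u + v) * Complex.betaIntegral u (v + 1) = v * Complex.betaIntegral u v :=
    mul_left_cancel₀ hne (by linear_combination key)
  field_simp
  linear_combination key2

lemma Beta_succ_right {x y : ℝ} (hx : 0 < x) (hy : 0 < y) :
    Beta x (y + 1) = y / (x + y) * Beta x y := by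
  have := betaIntegral_succ_right (u := x) (v := y) (by simpa) (by simpa)
  rw [← Beta_eq_complex hx hy] at this
  rw [show ((y:ℂ) + 1) = ((y + 1 : ℝ) : ℂ) by push_cast; ring] at this
  rw [← Beta_eq_complex hx (by linarith)] at this
  have : ((Beta x (y + 1) : ℝ) : ℂ) = ((y / (x + y) * Beta x y : ℝ) : ℂ) := by
    rw [this]; push_cast; ring
  exact_mod_cast this

lemma integrable_aux {Ω : Type*} [MeasurableSpace Ω] (μ : Measure Ω) [IsProbabilityMeasure μ]
    {f : Ω → ℝ} (hf : Measurable f) (h0 : ∀ ω, 0 ≤ f ω) (h1 : ∀ ω, f ω ≤ 1) :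
    Integrable f μ := by
  apply (integrable_const (1:ℝ)).mono' hf.aestronglyMeasurable
  filter_upwards with ω
  rw [Real.norm_eq_abs, abs_of_nonneg (h0 ω)]; exact h1 ω

lemma expectation_frechet_rpow {Ω : Type*} [MeasurableSpace Ω] (μ : Measure Ω)
    [IsProbabilityMeasure μ] (X : Ω → ℝ) (hX : Measurable X) {lam : ℝ} (hlam : 0 < lam)
    (S : ℝ → ℝ) (hS : ∀ t ∈ Set.Ioo (0:ℝ) 1, (μ {ω | t < frechetCDF (X ω)}).toReal = S t) :
    ∫ ω, frechetCDF (X ω) ^ lam ∂μ = lam * ∫ t in (0:ℝ)..1, t ^ (lam - 1) * S t := by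
  set f : Ω → ℝ := fun ω => frechetCDF (X ω) ^ lam with hf
  have hfm : Measurable f :=
    (Real.continuous_rpow_const hlam.le).measurable.comp (measurable_frechetCDF.comp hX)
  have hf0 : ∀ ω, 0 ≤ f ω := fun ω => Real.rpow_nonneg (frechetCDF_nonneg _) _
  have hf1 : ∀ ω, f ω ≤ 1 := fun ω =>
    Real.rpow_le_one (frechetCDF_nonneg _) (frechetCDF_le_one _) hlam.le
  have hint : Integrable f μ := integrable_aux μ hfm hf0 hf1
  set h : ℝ → ℝ := fun u => (μ {ω | u < frechetCDF (X ω)}).toReal with hh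
  have step1 : ∫ ω, f ω ∂μ = ∫ t in Set.Ioi (0:ℝ), h (t ^ lam⁻¹) := by
    rw [hint.integral_eq_integral_meas_lt (ae_of_all _ hf0)]
    apply setIntegral_congr_fun measurableSet_Ioi
    intro t ht
    have hset : {a | t < f a} = {ω | t ^ lam⁻¹ < frechetCDF (X ω)} := by
      ext ω
      simp only [Set.mem_setOf_eq]
      exact (Real.rpow_inv_lt_iff_of_pos (le_of_lt ht) (frechetCDF_nonneg _) hlam).symm
    simp only [hh]
    rw [hset]; rfl
  have step2 : ∫ t in Set.Ioi (0:ℝ), h (t ^ lam⁻¹) =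
      ∫ x in Set.Ioi (0:ℝ), lam * x ^ (lam - 1) * h x := by
    rw [← integral_comp_rpow_Ioi_of_pos (g := fun u => h (u ^ lam⁻¹)) hlam]
    apply setIntegral_congr_fun measurableSet_Ioi
    intro x hx
    simp only [smul_eq_mul]
    rw [Real.rpow_rpow_inv (le_of_lt hx) hlam.ne']
    try ring
  have hzero : ∀ x : ℝ, 1 < x → h x = 0 := by
    intro x hx
    have : {ω | x < frechetCDF (X ω)} = ∅ := by
      ext ω; simp only [Set.mem_setOf_eq, Set.mem_empty_iff_false, iff_false, not_lt]
      exact (frechetCDF_le_one _).trans hx.le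
    simp [hh, this]
  have step3 : ∫ x in Set.Ioi (0:ℝ), lam * x ^ (lam - 1) * h x =
      ∫ x in Set.Ioc (0:ℝ) 1, lam * x ^ (lam - 1) * h x := by
    rw [setIntegral_eq_of_subset_of_ae_diff_eq_zero measurableSet_Ioi.nullMeasurableSet
      Set.Ioc_subset_Ioi_self]
    apply Eventually.of_forall
    intro x hx
    have h1x : 1 < x := by
      simp only [Set.mem_diff, Set.mem_Ioi, Set.mem_Ioc, not_and, not_le] at hx
      exact hx.2 hx.1
    rw [hzero x h1x, mul_zero]
  have step4 : ∫ x in Set.Ioc (0:ℝ) 1, lam * x ^ (lam - 1) * h x =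
      ∫ x in Set.Ioo (0:ℝ) 1, lam * (x ^ (lam - 1) * S x) := by
    rw [integral_Ioc_eq_integral_Ioo]
    apply setIntegral_congr_fun measurableSet_Ioo
    intro x hx
    simp only [hh]
    rw [hS x hx]
    ring
  have step5 : ∫ t in (0:ℝ)..1, t ^ (lam - 1) * S t = ∫ x in Set.Ioo (0:ℝ) 1,
      x ^ (lam - 1) * S x := by
    rw [intervalIntegral.integral_of_le zero_le_one, integral_Ioc_eq_integral_Ioo]
  rw [step1, step2, step3, step4, step5, ← integral_const_mul]

lemma log_stuff {t : ℝ} (ht : t ∈ Set.Ioo (0:ℝ) 1) :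
    0 < -1 / Real.log t ∧ Real.exp (-1 / (-1 / Real.log t)) = t := by
  have hlog : Real.log t < 0 := Real.log_neg ht.1 ht.2
  constructor
  · rw [div_pos_iff]; right; constructor <;> linarith
  · rw [show -1 / (-1 / Real.log t) = Real.log t by field_simp]
    exact Real.exp_log ht.1

lemma frechetCDF_at_s {t : ℝ} (ht : t ∈ Set.Ioo (0:ℝ) 1) :
    frechetCDF (-1 / Real.log t) = t := by
  obtain ⟨hs, he⟩ := log_stuff ht
  rw [frechetCDF, if_pos hs, he]

lemma survival_eq {Ω : Type*} [MeasurableSpace Ω] (μ : Measure Ω) [IsProbabilityMeasure μ]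
    (X : Ω → ℝ) (hX : Measurable X) {t : ℝ} (ht : t ∈ Set.Ioo (0:ℝ) 1) :
    (μ {ω | t < frechetCDF (X ω)}).toReal =
      1 - (μ {ω | X ω ≤ -1 / Real.log t}).toReal := by
  have hset : {ω | t < frechetCDF (X ω)} = {ω | X ω ≤ -1 / Real.log t}ᶜ := by
    ext ω
    simp only [Set.mem_setOf_eq, Set.mem_compl_iff, not_le]
    exact frechetCDF_lt_iff ht.1 ht.2
  have hms : MeasurableSet {ω | X ω ≤ -1 / Real.log t} := measurableSet_le hX measurable_const
  rw [hset, measure_compl hms (measure_ne_top μ _), measure_univ,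
    ENNReal.toReal_sub_of_le prob_le_one ENNReal.one_ne_top]
  simp

lemma min_cdf {Ω : Type*} [MeasurableSpace Ω] (μ : Measure Ω) [IsProbabilityMeasure μ]
    (Y₁ Y₂ : Ω → ℝ) (hY₂ : Measurable Y₂) (θY : ℝ)
    (hm1 : ∀ z : ℝ, (μ {ω | Y₁ ω ≤ z}).toReal = frechetCDF z)
    (hm2 : ∀ z : ℝ, (μ {ω | Y₂ ω ≤ z}).toReal = frechetCDF z)
    (hjoint : ∀ z : ℝ, 0 < z → (μ {ω | Y₁ ω ≤ z ∧ Y₂ ω ≤ z}).toReal =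
      -1 + 2 * Real.exp (-1 / z) + (1 - Real.exp (-1 / z)) ^ θY)
    {z : ℝ} (hz : 0 < z) :
    (μ {ω | min (Y₁ ω) (Y₂ ω) ≤ z}).toReal = 1 - (1 - Real.exp (-1 / z)) ^ θY := by
  set A := {ω | Y₁ ω ≤ z}
  set B := {ω | Y₂ ω ≤ z}
  have hunion : {ω | min (Y₁ ω) (Y₂ ω) ≤ z} = A ∪ B := by
    ext ω; simp [A, B, min_le_iff]
  have hB : MeasurableSet B := measurableSet_le hY₂ measurable_const
  have key := measure_union_add_inter (μ := μ) A (t := B) hB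
  have key2 := congrArg ENNReal.toReal key
  rw [ENNReal.toReal_add (measure_ne_top μ _) (measure_ne_top μ _),
    ENNReal.toReal_add (measure_ne_top μ _) (measure_ne_top μ _)] at key2
  rw [hunion] at *
  have h1 : (μ A).toReal = Real.exp (-1 / z) := by
    rw [hm1 z, frechetCDF, if_pos hz]
  have h2 : (μ B).toReal = Real.exp (-1 / z) := by
    rw [hm2 z, frechetCDF, if_pos hz]
  have h3 := hjoint z hz
  rw [show {ω | Y₁ ω ≤ z ∧ Y₂ ω ≤ z} = A ∩ B from rfl] at h3
  linarith

lemma Beta_one {x : ℝ} (hx : 0 < x) : Beta x 1 = 1 / x := by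
  unfold Beta
  have : ∀ t : ℝ, t ^ (x - 1) * (1 - t) ^ ((1:ℝ) - 1) = t ^ (x - 1) := by
    intro t; rw [sub_self, Real.rpow_zero, mul_one]
  rw [intervalIntegral.integral_congr (fun t _ => this t)]
  rw [integral_rpow (Or.inl (by linarith))]
  rw [sub_add_cancel, Real.one_rpow, Real.zero_rpow hx.ne']
  norm_num

lemma E1_eval {lam : ℝ} (hlam : 0 < lam) :
    lam * ∫ t in (0:ℝ)..1, t ^ (lam - 1) * (1 - t) = 1 / (1 + lam) := by
  have h2 : (∫ t in (0:ℝ)..1, t ^ (lam - 1) * (1 - t)) = Beta lam (1 + 1) := by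
    unfold Beta
    apply intervalIntegral.integral_congr
    intro t _
    norm_num
  rw [h2, Beta_succ_right hlam one_pos, Beta_one hlam]
  field_simp
  ring

lemma E2_eval {lam θ : ℝ} (hlam : 0 < lam) (hθ : 0 < θ) :
    (∫ t in (0:ℝ)..1, t ^ (lam - 1) * (1 - t) ^ θ) = θ / (lam + θ) * Beta lam θ := by
  have h2 : (∫ t in (0:ℝ)..1, t ^ (lam - 1) * (1 - t) ^ θ) = Beta lam (θ + 1) := by
    unfold Beta
    apply intervalIntegral.integral_congr
    intro t _
    norm_num
  rw [h2, Beta_succ_right hlam hθ]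

lemma abs_rpow_identity {a b lam : ℝ} (ha : 0 ≤ a) (hb : 0 ≤ b) (hlam : 0 ≤ lam) :
    |a ^ lam - b ^ lam| = a ^ lam + b ^ lam - 2 * (min a b) ^ lam := by
  rcases le_total a b with h | h
  · rw [min_eq_left h, abs_of_nonpos (sub_nonpos.mpr (Real.rpow_le_rpow ha h hlam))]
    ring
  · rw [min_eq_right h, abs_of_nonneg (sub_nonneg.mpr (Real.rpow_le_rpow hb h hlam))]
    ring

/-- The F^λ-madogram of an inverted max-stable pair with extremal coefficient `θY` equals
`1/(1+λ) - (λθY/(λ+θY))·B(λ, θY)`. -/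
theorem f_lambda_madogram_inverted_max_stable
    {Ω : Type*} [MeasurableSpace Ω] (μ : Measure Ω) [IsProbabilityMeasure μ]
    (Y₁ Y₂ : Ω → ℝ) (hY₁ : Measurable Y₁) (hY₂ : Measurable Y₂)
    (θY lam : ℝ) (hθY : θY ∈ Set.Icc (1:ℝ) 2) (hlam : 0 < lam)
    (hm1 : ∀ z : ℝ, (μ {ω | Y₁ ω ≤ z}).toReal = frechetCDF z)
    (hm2 : ∀ z : ℝ, (μ {ω | Y₂ ω ≤ z}).toReal = frechetCDF z)
    (hjoint : ∀ z : ℝ, 0 < z → (μ {ω | Y₁ ω ≤ z ∧ Y₂ ω ≤ z}).toReal =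
      -1 + 2 * Real.exp (-1 / z) + (1 - Real.exp (-1 / z)) ^ θY) :
    (1/2) * ∫ ω, |frechetCDF (Y₁ ω) ^ lam - frechetCDF (Y₂ ω) ^ lam| ∂μ =
      1 / (1 + lam) - (lam * θY / (lam + θY)) * Beta lam θY := by
  have hθpos : (0:ℝ) < θY := lt_of_lt_of_le one_pos hθY.1
  set M : Ω → ℝ := fun ω => min (Y₁ ω) (Y₂ ω) with hM
  have hMm : Measurable M := hY₁.min hY₂
  -- survival functions
  have hs1 : ∀ t ∈ Set.Ioo (0:ℝ) 1,
      (μ {ω | t < frechetCDF (Y₁ ω)}).toReal = (fun t => 1 - t) t := by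
    intro t ht
    rw [survival_eq μ Y₁ hY₁ ht, hm1, frechetCDF_at_s ht]
  have hs2 : ∀ t ∈ Set.Ioo (0:ℝ) 1,
      (μ {ω | t < frechetCDF (Y₂ ω)}).toReal = (fun t => 1 - t) t := by
    intro t ht
    rw [survival_eq μ Y₂ hY₂ ht, hm2, frechetCDF_at_s ht]
  have hsM : ∀ t ∈ Set.Ioo (0:ℝ) 1,
      (μ {ω | t < frechetCDF (M ω)}).toReal = (fun t => (1 - t) ^ θY) t := by
    intro t ht
    obtain ⟨hspos, he⟩ := log_stuff ht
    rw [survival_eq μ M hMm ht]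
    rw [show {ω | M ω ≤ -1 / Real.log t} = {ω | min (Y₁ ω) (Y₂ ω) ≤ -1 / Real.log t} from rfl]
    rw [min_cdf μ Y₁ Y₂ hY₂ θY hm1 hm2 hjoint hspos, he]
    ring
  have E1 := expectation_frechet_rpow μ Y₁ hY₁ hlam _ hs1
  have E2 := expectation_frechet_rpow μ Y₂ hY₂ hlam _ hs2
  have EM := expectation_frechet_rpow μ M hMm hlam _ hsM
  rw [E1_eval hlam] at E1 E2
  rw [E2_eval hlam hθpos] at EM
  -- pointwise identity
  have hpt : ∀ ω, |frechetCDF (Y₁ ω) ^ lam - frechetCDF (Y₂ ω) ^ lam| =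
      frechetCDF (Y₁ ω) ^ lam + frechetCDF (Y₂ ω) ^ lam - 2 * frechetCDF (M ω) ^ lam := by
    intro ω
    rw [abs_rpow_identity (frechetCDF_nonneg _) (frechetCDF_nonneg _) hlam.le]
    rw [show min (frechetCDF (Y₁ ω)) (frechetCDF (Y₂ ω)) = frechetCDF (M ω) from
      (frechetCDF_mono.map_min).symm]
  -- integrability
  have mk : ∀ (X : Ω → ℝ), Measurable X → Integrable (fun ω => frechetCDF (X ω) ^ lam) μ := by
    intro X hX
    apply integrable_aux μ
      ((Real.continuous_rpow_const hlam.le).measurable.comp (measurable_frechetCDF.comp hX))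
    · exact fun ω => Real.rpow_nonneg (frechetCDF_nonneg _) _
    · exact fun ω => Real.rpow_le_one (frechetCDF_nonneg _) (frechetCDF_le_one _) hlam.le
  have i1 := mk Y₁ hY₁
  have i2 := mk Y₂ hY₂
  have iM := mk M hMm
  have hsplit : ∫ ω, |frechetCDF (Y₁ ω) ^ lam - frechetCDF (Y₂ ω) ^ lam| ∂μ =
      (∫ ω, frechetCDF (Y₁ ω) ^ lam ∂μ) + (∫ ω, frechetCDF (Y₂ ω) ^ lam ∂μ)
        - 2 * ∫ ω, frechetCDF (M ω) ^ lam ∂μ := by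
    have i12 : Integrable (fun ω => frechetCDF (Y₁ ω) ^ lam + frechetCDF (Y₂ ω) ^ lam) μ :=
      i1.add i2
    have iM2 : Integrable (fun ω => 2 * frechetCDF (M ω) ^ lam) μ := iM.const_mul 2
    rw [integral_congr_ae (ae_of_all _ hpt)]
    rw [integral_sub i12 iM2, integral_add i1 i2, integral_const_mul]
  rw [hsplit, E1, E2, EM]
  ring
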